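/- Let (Ω,μ) be an infinite measure space and E ⊂ L¹+L^∞ a symmetric Banach function space. Then E ⊆ R_μ := {f ∈ L¹+L^∞ : μ_t(f) → 0 as t→∞} if and only if the constant function 1 does not belong to E. -/

import Mathlib

open MeasureTheory Filter
open scoped ENNReal

variable {α : Type*}

/-- Non-increasing rearrangement `μ_t(f) = inf{λ>0 : μ{|f|>λ} ≤ t}`. -/
noncomputable def rearr [MeasurableSpace α] (μ : Measure α) (f : α → ℝ) (t : ℝ) : ℝ :=
  sInf {l : ℝ | 0 < l ∧ μ {x | l < |f x|} ≤ ENNReal.ofReal t}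

/-- Membership in `L¹ + L^∞`. -/
def MemL1pLinf [MeasurableSpace α] (μ : Measure α) (f : α → ℝ) : Prop :=
  ∃ g h : α → ℝ, f = g + h ∧ Integrable g μ ∧ MemLp h ⊤ μ

/-- Membership in `R_μ = {f ∈ L¹+L^∞ : μ_t(f) → 0 as t → ∞}`. -/
def MemR [MeasurableSpace α] (μ : Measure α) (f : α → ℝ) : Prop :=
  MemL1pLinf μ f ∧ Tendsto (rearr μ f) atTop (nhds 0)

/-- A symmetric Banach function space. -/
structure SymmetricSpace [MeasurableSpace α] (μ : Measure α) where
  carrier : Set (α → ℝ)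
  norm' : (α → ℝ) → ℝ
  subset_L1pLinf : ∀ f ∈ carrier, MemL1pLinf μ f
  smul_mem : ∀ (c : ℝ), ∀ f ∈ carrier, c • f ∈ carrier
  symm : ∀ f ∈ carrier, ∀ g : α → ℝ, MemL1pLinf μ g →
    (∀ t > 0, rearr μ g t ≤ rearr μ f t) → g ∈ carrier ∧ norm' g ≤ norm' f

/-!
If `μ_t(f)` does not tend to `0`, then, being non-increasing, it stays above some `ε > 0` for all
`t > 0`. Since `μ(Ω) = ∞`, the rearrangement of the constant `ε` is identically `ε`, so symmetry of
`E` puts `ε`, hence `1`, into `E`. Conversely `μ_t(1) = 1` does not tend to `0`.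
-/

open Set Topology

section

variable [MeasurableSpace α] {μ : Measure α}

theorem MeasureTheory.Integrable.tendsto_measure_norm_gt_atTop {β : Type*}
    [NormedAddCommGroup β] {g : α → β} (hg : Integrable g μ) :
    Tendsto (fun n : ℕ => μ {x | (n : ℝ) < ‖g x‖}) atTop (𝓝 0) := by
  have hinter : (⋂ n : ℕ, {x | (n : ℝ) < ‖g x‖}) = ∅ := by
    refine eq_empty_of_forall_notMem fun x hx => ?_
    obtain ⟨n, hn⟩ := exists_nat_gt ‖g x‖
    exact (mem_iInter.1 hx n).not_gt hn
  have hlim := tendsto_measure_iInter_atTop (μ := μ)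
    (fun n : ℕ => nullMeasurableSet_lt aemeasurable_const hg.1.norm.aemeasurable)
    (fun m n hmn x (hx : (n : ℝ) < ‖g x‖) => (Nat.cast_le.2 hmn).trans_lt hx)
    ⟨1, (hg.measure_norm_gt_lt_top (by norm_num : (0 : ℝ) < (1 : ℕ))).ne⟩
  rwa [hinter, measure_empty] at hlim

theorem MemL1pLinf.exists_pos_measure_abs_gt_le {f : α → ℝ} (hf : MemL1pLinf μ f) {t : ℝ}
    (ht : 0 < t) : ∃ l : ℝ, 0 < l ∧ μ {x | l < |f x|} ≤ ENNReal.ofReal t := by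
  obtain ⟨g, h, rfl, hg, hh⟩ := hf
  obtain ⟨n, hn⟩ := ((hg.tendsto_measure_norm_gt_atTop.eventually
    (gt_mem_nhds (ENNReal.ofReal_pos.2 ht))).and (eventually_gt_atTop 0)).exists
  set C := lpNorm h ∞ μ
  refine ⟨n + C, add_pos_of_pos_of_nonneg (Nat.cast_pos.2 hn.2) lpNorm_nonneg,
    le_trans (measure_mono_ae ?_) hn.1.le⟩
  filter_upwards [ae_le_lpNorm_exponent_top hh] with x hx (hlt : _ < |g x + h x|)
  change (n : ℝ) < ‖g x‖
  have := abs_add_le (g x) (h x)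
  rw [Real.norm_eq_abs] at hx ⊢
  linarith

theorem rearr_nonneg (μ : Measure α) (f : α → ℝ) (t : ℝ) : 0 ≤ rearr μ f t :=
  Real.sInf_nonneg fun _ hl => hl.1.le

theorem rearr_le_of_measure_le {f : α → ℝ} {t l : ℝ} (hl : 0 < l)
    (h : μ {x | l < |f x|} ≤ ENNReal.ofReal t) : rearr μ f t ≤ l :=
  csInf_le ⟨0, fun _ hl => hl.1.le⟩ ⟨hl, h⟩

theorem rearr_const (hμ : μ univ = ∞) {c : ℝ} (hc : 0 < c) :
    rearr μ (fun _ => c) = fun _ => c := by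
  funext t
  refine le_antisymm (rearr_le_of_measure_le hc (by simp [abs_of_pos hc])) ?_
  refine le_csInf ⟨c, hc, by simp [abs_of_pos hc]⟩ fun l ⟨_, hlt⟩ => not_lt.1 fun hlc => ?_
  have huniv : {x : α | l < |c|} = univ := eq_univ_of_forall fun _ => by
    show l < |c|; rwa [abs_of_pos hc]
  rw [huniv, hμ] at hlt
  exact ENNReal.ofReal_ne_top (top_le_iff.1 hlt)

theorem MemL1pLinf.rearr_antitoneOn {f : α → ℝ} (hf : MemL1pLinf μ f) :
    AntitoneOn (rearr μ f) (Ioi 0) := fun _ ht _ _ hts =>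
  csInf_le_csInf ⟨0, fun _ hl => hl.1.le⟩ (hf.exists_pos_measure_abs_gt_le ht)
    fun _ ⟨hl, hμl⟩ => ⟨hl, hμl.trans (ENNReal.ofReal_le_ofReal hts)⟩

theorem MemL1pLinf.exists_pos_le_rearr_of_not_tendsto {f : α → ℝ} (hf : MemL1pLinf μ f)
    (h : ¬Tendsto (rearr μ f) atTop (𝓝 0)) : ∃ ε > 0, ∀ t > 0, ε ≤ rearr μ f t := by
  by_contra! hsmall
  refine h (tendsto_order.2 ⟨fun a ha => Eventually.of_forall fun t =>
    ha.trans_le (rearr_nonneg μ f t), fun ε hε => ?_⟩)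
  obtain ⟨t, ht, hlt⟩ := hsmall ε hε
  filter_upwards [eventually_ge_atTop t] with s hts
  exact (hf.rearr_antitoneOn ht (ht.trans_le hts) hts).trans_lt hlt

namespace SymmetricSpace

variable (E : SymmetricSpace μ)

theorem const_mem_of_le_rearr (hμ : μ univ = ∞) {f : α → ℝ} (hf : f ∈ E.carrier) {ε : ℝ}
    (hε : 0 < ε) (hle : ∀ t > 0, ε ≤ rearr μ f t) : (fun _ => ε) ∈ E.carrier := by
  refine (E.symm f hf _ ⟨0, fun _ => ε, by simp, integrable_zero _ _ _, memLp_top_const ε⟩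
    fun t ht => ?_).1
  rw [rearr_const hμ hε]
  exact hle t ht

theorem one_mem_of_const_mem {c : ℝ} (hc : c ≠ 0) (h : (fun _ => c) ∈ E.carrier) :
    (fun _ => (1 : ℝ)) ∈ E.carrier := by
  have := E.smul_mem c⁻¹ _ h
  rwa [show c⁻¹ • (fun _ : α => c) = fun _ => 1 from funext fun _ => inv_mul_cancel₀ hc] at this

end SymmetricSpace

end

/-- For an infinite measure space, a symmetric space `E` is contained in `R_μ`
iff the constant function `1` does not belong to `E`. -/
theorem stmt1 [MeasurableSpace α] (μ : Measure α) (hμ : μ Set.univ = ∞)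
    (E : SymmetricSpace μ) :
    (∀ f ∈ E.carrier, MemR μ f) ↔ (fun _ => (1:ℝ)) ∉ E.carrier := by
  constructor
  · intro hE hone
    have hlim := (hE _ hone).2
    rw [rearr_const hμ one_pos] at hlim
    exact one_ne_zero (tendsto_nhds_unique tendsto_const_nhds hlim)
  · intro hone f hf
    have hfL := E.subset_L1pLinf f hf
    refine ⟨hfL, by_contra fun hlim => ?_⟩
    obtain ⟨ε, hε, hle⟩ := hfL.exists_pos_le_rearr_of_not_tendsto hlim
    exact hone (E.one_mem_of_const_mem hε.ne' (E.const_mem_of_le_rearr hμ hf hε hle))
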